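/- arXiv:1610.07388 — 2 statements merged into one kernel-verified Lean document; each statement's English description precedes it below -/
import Mathlib

section
/- The inconsistency ranking ⪰⁶ defined for an n×n matrix A and an m×m matrix B by A ⪰⁶ B iff ( max_{i<j<k} max{ a_ij a_jk / a_ik , a_ik / (a_ij a_jk) } )ⁿ ≤ ( max_{i<j<k} max{ b_ij b_jk / b_ik , b_ik / (b_ij b_jk) } )ᵐ satisfies positive responsiveness, invariance under inversion of preferences, homogeneous treatment of entities, scale invariance and monotonicity, but fails reducibility. -/
open Matrix

/-- A pairwise comparison matrix (of size `n ≥ 3`): a positive reciprocal matrix. -/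
structure PCM where
  n : ℕ
  hn : 3 ≤ n
  A : Matrix (Fin n) (Fin n) ℝ
  pos : ∀ i j, 0 < A i j
  recip : ∀ i j, A j i = 1 / A i j

/-- Index triples `i < j < k`. -/
def triples (n : ℕ) : Finset (Fin n × Fin n × Fin n) :=
  Finset.univ.filter fun t => t.1 < t.2.1 ∧ t.2.1 < t.2.2

lemma triples_nonempty (n : ℕ) (hn : 3 ≤ n) : (triples n).Nonempty :=
  ⟨(⟨0, by omega⟩, ⟨1, by omega⟩, ⟨2, by omega⟩), by
    simp only [triples, Finset.mem_filter, Finset.mem_univ, true_and]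
    exact ⟨Fin.mk_lt_mk.mpr (by omega), Fin.mk_lt_mk.mpr (by omega)⟩⟩

/-- The Koczkodaj ratio `K(A) = max_{i<j<k} max{a_ij a_jk / a_ik, a_ik/(a_ij a_jk)}`. -/
noncomputable def KratioM {n : ℕ} (hn : 3 ≤ n) (A : Matrix (Fin n) (Fin n) ℝ) : ℝ :=
  (triples n).sup' (triples_nonempty n hn) fun t =>
    max (A t.1 t.2.1 * A t.2.1 t.2.2 / A t.1 t.2.2)
        (A t.1 t.2.2 / (A t.1 t.2.1 * A t.2.1 t.2.2))

noncomputable def Kratio (M : PCM) : ℝ := KratioM M.hn M.A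

/-- The Koczkodaj inconsistency ranking: `A ⪰ᴷ B` iff `K(A) ≤ K(B)`. -/
noncomputable def KRank (M N : PCM) : Prop := Kratio M ≤ Kratio N

/-- The triad `(t1; t2; t3)` as a 3×3 pairwise comparison matrix. -/
noncomputable def triad (t1 t2 t3 : ℝ) (h1 : 0 < t1) (h2 : 0 < t2) (h3 : 0 < t3) : PCM where
  n := 3
  hn := le_refl 3
  A := !![1, t1, t2; 1/t1, 1, t3; 1/t2, 1/t3, 1]
  pos := by
    intro i j
    fin_cases i <;> fin_cases j <;> simp <;> positivity
  recip := by
    intro i j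
    fin_cases i <;> fin_cases j <;> simp [one_div_one_div]

/-- The transpose of a pairwise comparison matrix. -/
def PCM.tr (M : PCM) : PCM where
  n := M.n
  hn := M.hn
  A := M.A.transpose
  pos := by intro i j; rw [Matrix.transpose_apply]; exact M.pos j i
  recip := by intro i j; rw [Matrix.transpose_apply, Matrix.transpose_apply]; exact M.recip j i

/-- The principal submatrix of `M` given by an index selection `σ`. -/
def subPCM (M : PCM) (m : ℕ) (hm : 3 ≤ m) (σ : Fin m → Fin M.n) : PCM where
  n := m
  hn := hm
  A := Matrix.of fun i j => M.A (σ i) (σ j)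
  pos := fun i j => M.pos (σ i) (σ j)
  recip := fun i j => M.recip (σ i) (σ j)

/-- `T` is a triad (3×3 pairwise comparison submatrix) of `M`. -/
def IsTriadOf (T M : PCM) : Prop :=
  ∃ σ : Fin 3 → Fin M.n, Function.Injective σ ∧ T = subPCM M 3 (le_refl 3) σ

/-- `B` is a pairwise comparison submatrix of `M` (of size `3 ≤ m < n`). -/
def IsSubPCM (B M : PCM) : Prop :=
  ∃ (m : ℕ) (hm : 3 ≤ m) (σ : Fin m → Fin M.n),
    m < M.n ∧ Function.Injective σ ∧ B = subPCM M m hm σ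

/-- Equivalence (`∼`) derived from a ranking `⪰`. -/
def Sim (R : PCM → PCM → Prop) (M N : PCM) : Prop := R M N ∧ R N M

/-- Strict relation (`≻`) derived from a ranking `⪰`. -/
def Strict (R : PCM → PCM → Prop) (M N : PCM) : Prop := R M N ∧ ¬ R N M

/-- An inconsistency ranking is a total and transitive relation. -/
def IsRanking (R : PCM → PCM → Prop) : Prop :=
  (∀ M N, R M N ∨ R N M) ∧ Transitive R

/-- Positive responsiveness. -/
noncomputable def PR (R : PCM → PCM → Prop) : Prop :=
  ∀ (s2 t2 : ℝ) (hs : 1 ≤ s2) (ht : 1 ≤ t2),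
    (R (triad 1 s2 1 one_pos (lt_of_lt_of_le one_pos hs) one_pos)
       (triad 1 t2 1 one_pos (lt_of_lt_of_le one_pos ht) one_pos) ↔ s2 ≤ t2)

/-- Invariance under inversion of preferences. -/
noncomputable def IIP (R : PCM → PCM → Prop) : Prop :=
  ∀ (t1 t2 t3 : ℝ) (h1 : 0 < t1) (h2 : 0 < t2) (h3 : 0 < t3),
    Sim R (triad t1 t2 t3 h1 h2 h3) (triad t1 t2 t3 h1 h2 h3).tr

/-- Homogeneous treatment of entities. -/
noncomputable def HTE (R : PCM → PCM → Prop) : Prop :=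
  ∀ (t2 t3 : ℝ) (h2 : 0 < t2) (h3 : 0 < t3),
    Sim R (triad 1 t2 t3 one_pos h2 h3)
          (triad 1 (t2 / t3) 1 one_pos (div_pos h2 h3) one_pos)

/-- Scale invariance. -/
noncomputable def SI (R : PCM → PCM → Prop) : Prop :=
  ∀ (t1 t2 t3 k : ℝ) (h1 : 0 < t1) (h2 : 0 < t2) (h3 : 0 < t3) (hk : 0 < k),
    Sim R (triad t1 t2 t3 h1 h2 h3)
          (triad (k * t1) (k ^ 2 * t2) (k * t3)
            (by positivity) (by positivity) (by positivity))

/-- Monotonicity: `A ⪯ T` for every triad `T` of `A`. -/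
def MON (R : PCM → PCM → Prop) : Prop :=
  ∀ M T : PCM, IsTriadOf T M → R T M

/-- Reducibility: every pairwise comparison matrix is equivalent to one of its triads. -/
def RED (R : PCM → PCM → Prop) : Prop :=
  ∀ M : PCM, ∃ T : PCM, IsTriadOf T M ∧ Sim R M T

/-- `min`-based variant of the Koczkodaj ratio. -/
noncomputable def KminM {n : ℕ} (hn : 3 ≤ n) (A : Matrix (Fin n) (Fin n) ℝ) : ℝ :=
  (triples n).inf' (triples_nonempty n hn) fun t =>
    max (A t.1 t.2.1 * A t.2.1 t.2.2 / A t.1 t.2.2)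
        (A t.1 t.2.2 / (A t.1 t.2.1 * A t.2.1 t.2.2))

noncomputable def Kmin (M : PCM) : ℝ := KminM M.hn M.A

/-- Ranking of Example 1: `A ⪰¹ B` iff `Kmin A ≥ Kmin B`. -/
noncomputable def Rank1 (M N : PCM) : Prop := Kmin N ≤ Kmin M

/-- Upper-triangle-only variant of the Koczkodaj ratio. -/
noncomputable def K2M {n : ℕ} (hn : 3 ≤ n) (A : Matrix (Fin n) (Fin n) ℝ) : ℝ :=
  (triples n).sup' (triples_nonempty n hn) fun t =>
    A t.1 t.2.1 * A t.2.1 t.2.2 / A t.1 t.2.2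

noncomputable def K2 (M : PCM) : ℝ := K2M M.hn M.A

/-- Ranking of Example 2. -/
noncomputable def Rank2 (M N : PCM) : Prop := K2 M ≤ K2 N

noncomputable def K3M {n : ℕ} (hn : 3 ≤ n) (A : Matrix (Fin n) (Fin n) ℝ) : ℝ :=
  (triples n).sup' (triples_nonempty n hn) fun t =>
    max (A t.2.1 t.2.2 ^ 2 / A t.1 t.2.2) (A t.1 t.2.2 / A t.2.1 t.2.2 ^ 2)

noncomputable def K3 (M : PCM) : ℝ := K3M M.hn M.A

/-- Ranking of Example 3. -/
noncomputable def Rank3 (M N : PCM) : Prop := K3 M ≤ K3 N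

noncomputable def K4M {n : ℕ} (hn : 3 ≤ n) (A : Matrix (Fin n) (Fin n) ℝ) : ℝ :=
  (triples n).sup' (triples_nonempty n hn) fun t =>
    max (A t.2.1 t.2.2 / A t.1 t.2.2) (A t.1 t.2.2 / A t.2.1 t.2.2)

noncomputable def K4 (M : PCM) : ℝ := K4M M.hn M.A

/-- Ranking of Example 4. -/
noncomputable def Rank4 (M N : PCM) : Prop := K4 M ≤ K4 N

/-- Ranking of Example 5: `A ⪰⁵ B` iff `Kmin A ≤ Kmin B`. -/
noncomputable def Rank5 (M N : PCM) : Prop := Kmin M ≤ Kmin N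

/-- Ranking of Example 6: `A ⪰⁶ B` iff `K(A)ⁿ ≤ K(B)ᵐ`. -/
noncomputable def Rank6 (M N : PCM) : Prop := Kratio M ^ M.n ≤ Kratio N ^ N.n

/-- The Koczkodaj inconsistency index. -/
noncomputable def IKM {n : ℕ} (hn : 3 ≤ n) (A : Matrix (Fin n) (Fin n) ℝ) : ℝ :=
  (triples n).sup' (triples_nonempty n hn) fun t =>
    min |1 - A t.1 t.2.2 / (A t.1 t.2.1 * A t.2.1 t.2.2)|
        |1 - A t.1 t.2.1 * A t.2.1 t.2.2 / A t.1 t.2.2|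

noncomputable def IK (M : PCM) : ℝ := IKM M.hn M.A

lemma mem_triples_three : ∀ t ∈ triples 3, t = ((0:Fin 3), (1:Fin 3), (2:Fin 3)) := by decide

lemma mem_triples_three' : ((0:Fin 3), (1:Fin 3), (2:Fin 3)) ∈ triples 3 := by decide

lemma KratioM_three (A : Matrix (Fin 3) (Fin 3) ℝ) :
    KratioM le_rfl A = max (A 0 1 * A 1 2 / A 0 2) (A 0 2 / (A 0 1 * A 1 2)) := by
  unfold KratioM
  apply le_antisymm
  · apply Finset.sup'_le (α := ℝ)
    intro b hb
    exact le_of_eq (by rw [mem_triples_three b hb])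
  · exact Finset.le_sup'
      (fun t : Fin 3 × Fin 3 × Fin 3 =>
        max (A t.1 t.2.1 * A t.2.1 t.2.2 / A t.1 t.2.2)
            (A t.1 t.2.2 / (A t.1 t.2.1 * A t.2.1 t.2.2))) mem_triples_three'

lemma Kratio_triad (t1 t2 t3 : ℝ) (h1 : 0 < t1) (h2 : 0 < t2) (h3 : 0 < t3) :
    Kratio (triad t1 t2 t3 h1 h2 h3) = max (t1 * t3 / t2) (t2 / (t1 * t3)) := by
  rw [show Kratio (triad t1 t2 t3 h1 h2 h3) = KratioM (n := 3) le_rfl (triad t1 t2 t3 h1 h2 h3).A from rfl,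
    KratioM_three (triad t1 t2 t3 h1 h2 h3).A]
  simp [triad]
noncomputable def Kterm {n : ℕ} (A : Matrix (Fin n) (Fin n) ℝ) (i j k : Fin n) : ℝ :=
  max (A i j * A j k / A i k) (A i k / (A i j * A j k))

lemma one_le_Kterm (M : PCM) (i j k : Fin M.n) : 1 ≤ Kterm M.A i j k := by
  have h1 := M.pos i j; have h2 := M.pos j k; have h3 := M.pos i k
  unfold Kterm
  have hx : M.A i k / (M.A i j * M.A j k) = (M.A i j * M.A j k / M.A i k)⁻¹ := by
    rw [inv_div]
  rw [hx]
  rcases le_total 1 (M.A i j * M.A j k / M.A i k) with h | h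
  · exact le_max_of_le_left h
  · refine le_max_of_le_right ?_
    rw [le_inv_comm₀]
    · simpa using h
    · norm_num
    · positivity
lemma Kterm_swapL (M : PCM) (i j k : Fin M.n) : Kterm M.A j i k = Kterm M.A i j k := by
  have h1 := (M.pos i j).ne'; have h2 := (M.pos j k).ne'; have h3 := (M.pos i k).ne'
  unfold Kterm
  rw [M.recip i j, max_comm]
  congr 1 <;> field_simp <;> first | exact Or.inl (mul_comm _ _) | ring

lemma Kterm_swapR (M : PCM) (i j k : Fin M.n) : Kterm M.A i k j = Kterm M.A i j k := by
  have h1 := (M.pos i j).ne'; have h2 := (M.pos j k).ne'; have h3 := (M.pos i k).ne'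
  unfold Kterm
  rw [M.recip j k, max_comm]
  congr 1 <;> field_simp <;> first | exact Or.inl (mul_comm _ _) | ring

lemma Kterm_sorted_le (M : PCM) (i j k : Fin M.n) (hij : i < j) (hjk : j < k) :
    Kterm M.A i j k ≤ Kratio M := by
  have hmem : (i, j, k) ∈ triples M.n := by
    simp only [triples, Finset.mem_filter, Finset.mem_univ, true_and]
    exact ⟨hij, hjk⟩
  exact Finset.le_sup'
      (fun t : Fin M.n × Fin M.n × Fin M.n =>
        max (M.A t.1 t.2.1 * M.A t.2.1 t.2.2 / M.A t.1 t.2.2)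
            (M.A t.1 t.2.2 / (M.A t.1 t.2.1 * M.A t.2.1 t.2.2))) hmem

lemma Kterm_le (M : PCM) (i j k : Fin M.n) (hij : i ≠ j) (hik : i ≠ k) (hjk : j ≠ k) :
    Kterm M.A i j k ≤ Kratio M := by
  rcases lt_or_gt_of_ne hij with h1 | h1 <;> rcases lt_or_gt_of_ne hik with h2 | h2 <;>
    rcases lt_or_gt_of_ne hjk with h3 | h3
  · exact Kterm_sorted_le M i j k h1 h3
  · rw [Kterm_swapR M i k j]; exact Kterm_sorted_le M i k j h2 h3
  · exact absurd (lt_trans (lt_trans h2 h1) h3) (lt_irrefl k)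
  · rw [Kterm_swapR M i k j, Kterm_swapL M k i j]
    exact Kterm_sorted_le M k i j h2 h1
  · rw [Kterm_swapL M j i k]; exact Kterm_sorted_le M j i k h1 h2
  · exact absurd (lt_trans (lt_trans h3 h1) h2) (lt_irrefl k)
  · rw [Kterm_swapL M j i k, Kterm_swapR M j k i]
    exact Kterm_sorted_le M j k i h3 h2
  · rw [Kterm_swapL M j i k, Kterm_swapR M j k i, Kterm_swapL M k j i]
    exact Kterm_sorted_le M k j i h3 h1

lemma one_le_Kratio (M : PCM) : 1 ≤ Kratio M := by
  obtain ⟨t, ht⟩ := triples_nonempty M.n M.hn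
  refine le_trans (one_le_Kterm M t.1 t.2.1 t.2.2) ?_
  exact Finset.le_sup'
      (fun t : Fin M.n × Fin M.n × Fin M.n =>
        max (M.A t.1 t.2.1 * M.A t.2.1 t.2.2 / M.A t.1 t.2.2)
            (M.A t.1 t.2.2 / (M.A t.1 t.2.1 * M.A t.2.1 t.2.2))) ht
lemma Kratio_sub (M : PCM) (σ : Fin 3 → Fin M.n) :
    Kratio (subPCM M 3 le_rfl σ) = Kterm M.A (σ 0) (σ 1) (σ 2) := by
  rw [show Kratio (subPCM M 3 le_rfl σ)
      = KratioM (n := 3) le_rfl (subPCM M 3 le_rfl σ).A from rfl, KratioM_three (subPCM M 3 le_rfl σ).A]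
  rfl

lemma Kratio_triadOf_le (M T : PCM) (h : IsTriadOf T M) : Kratio T ≤ Kratio M := by
  obtain ⟨σ, hσ, rfl⟩ := h
  rw [show subPCM M 3 (le_refl 3) σ = subPCM M 3 le_rfl σ from rfl, Kratio_sub]
  exact Kterm_le M (σ 0) (σ 1) (σ 2)
    (fun e => by exact absurd (hσ e) (by decide))
    (fun e => by exact absurd (hσ e) (by decide))
    (fun e => by exact absurd (hσ e) (by decide))

noncomputable def M4 : PCM where
  n := 4
  hn := by norm_num
  A := !![1, 2, 1, 1; 1/2, 1, 1, 1; 1, 1, 1, 2; 1, 1, 1/2, 1]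
  pos := by intro i j; fin_cases i <;> fin_cases j <;> norm_num
  recip := by intro i j; fin_cases i <;> fin_cases j <;> norm_num

lemma mem_triples_four : ∀ t ∈ triples 4,
    t = ((0:Fin 4), (1:Fin 4), (2:Fin 4)) ∨ t = ((0:Fin 4), (1:Fin 4), (3:Fin 4)) ∨
    t = ((0:Fin 4), (2:Fin 4), (3:Fin 4)) ∨ t = ((1:Fin 4), (2:Fin 4), (3:Fin 4)) := by
  decide

lemma M4_A : M4.A = !![1, 2, 1, 1; 1/2, 1, 1, 1; 1, 1, 1, 2; 1, 1, 1/2, 1] := rfl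

lemma Kratio_M4 : Kratio M4 = 2 := by
  unfold Kratio KratioM
  apply le_antisymm
  · apply Finset.sup'_le (α := ℝ)
    intro t ht
    rcases mem_triples_four t ht with rfl | rfl | rfl | rfl <;>
      norm_num [M4_A, Matrix.cons_val_two, Matrix.cons_val_three, Matrix.vecHead, Matrix.vecTail]
  · have hmem : ((0:Fin 4), (1:Fin 4), (2:Fin 4)) ∈ triples 4 := by decide
    refine le_trans ?_ (Finset.le_sup'
      (fun t : Fin 4 × Fin 4 × Fin 4 =>
        max (M4.A t.1 t.2.1 * M4.A t.2.1 t.2.2 / M4.A t.1 t.2.2)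
            (M4.A t.1 t.2.2 / (M4.A t.1 t.2.1 * M4.A t.2.1 t.2.2))) hmem)
    norm_num [M4_A, Matrix.cons_val_two, Matrix.cons_val_three, Matrix.vecHead, Matrix.vecTail]
lemma sim_of_eq {M N : PCM} (hn : M.n = N.n) (h : Kratio M = Kratio N) : Sim Rank6 M N := by
  constructor <;> unfold Rank6 <;> rw [h, hn]

theorem rank6_properties' :
    PR Rank6 ∧ IIP Rank6 ∧ HTE Rank6 ∧ SI Rank6 ∧ MON Rank6 ∧ ¬ RED Rank6 := by
  have key : ∀ u : ℝ, 1 ≤ u → max (1 * 1 / u) (u / (1 * 1)) = u := by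
    intro u hu
    have hu0 : 0 < u := by linarith
    have hside : (1:ℝ) * 1 / u ≤ u / (1 * 1) := by
      rw [one_mul, div_one]
      exact le_trans (by rw [div_le_one hu0]; exact hu) hu
    rw [max_eq_right hside, one_mul, div_one]
  refine ⟨?_, ?_, ?_, ?_, ?_, ?_⟩
  · -- PR
    intro s2 t2 hs ht
    unfold Rank6
    rw [show (triad 1 s2 1 one_pos (lt_of_lt_of_le one_pos hs) one_pos).n = 3 from rfl,
        show (triad 1 t2 1 one_pos (lt_of_lt_of_le one_pos ht) one_pos).n = 3 from rfl,
        Kratio_triad, Kratio_triad, key s2 hs, key t2 ht]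
    exact pow_le_pow_iff_left₀ (by linarith) (by linarith) (by norm_num)
  · -- IIP
    intro t1 t2 t3 h1 h2 h3
    refine sim_of_eq rfl ?_
    rw [Kratio_triad,
      show Kratio (triad t1 t2 t3 h1 h2 h3).tr
        = KratioM (n := 3) le_rfl (triad t1 t2 t3 h1 h2 h3).tr.A from rfl, KratioM_three (triad t1 t2 t3 h1 h2 h3).tr.A]
    have e1 : (triad t1 t2 t3 h1 h2 h3).tr.A (0 : Fin 3) (1 : Fin 3) = 1 / t1 := by
      simp [PCM.tr, triad]
    have e2 : (triad t1 t2 t3 h1 h2 h3).tr.A (1 : Fin 3) (2 : Fin 3) = 1 / t3 := by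
      simp [PCM.tr, triad]
    have e3 : (triad t1 t2 t3 h1 h2 h3).tr.A (0 : Fin 3) (2 : Fin 3) = 1 / t2 := by
      simp [PCM.tr, triad]
    rw [e1, e2, e3, max_comm]
    congr 1 <;> field_simp
  · -- HTE
    intro t2 t3 h2 h3
    refine sim_of_eq rfl ?_
    rw [Kratio_triad, Kratio_triad]
    congr 1 <;> field_simp
  · -- SI
    intro t1 t2 t3 k h1 h2 h3 hk
    refine sim_of_eq rfl ?_
    rw [Kratio_triad, Kratio_triad]
    have hk' : k ≠ 0 := hk.ne'
    congr 1 <;> field_simp <;> ring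
  · -- MON
    intro M T hT
    obtain ⟨σ, hσ, rfl⟩ := hT
    show Kratio (subPCM M 3 (le_refl 3) σ) ^ 3 ≤ Kratio M ^ M.n
    have h1 : Kratio (subPCM M 3 (le_refl 3) σ) ≤ Kratio M :=
      Kratio_triadOf_le M _ ⟨σ, hσ, rfl⟩
    calc Kratio (subPCM M 3 (le_refl 3) σ) ^ 3
        ≤ Kratio M ^ 3 :=
          pow_le_pow_left₀ (le_trans zero_le_one (one_le_Kratio _)) h1 3
      _ ≤ Kratio M ^ M.n := pow_le_pow_right₀ (one_le_Kratio M) M.hn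
  · -- ¬ RED
    intro h
    obtain ⟨T, hT, hsim⟩ := h M4
    have hle : Kratio T ≤ 2 := Kratio_M4 ▸ Kratio_triadOf_le M4 T hT
    have h1 : 1 ≤ Kratio T := one_le_Kratio T
    obtain ⟨σ, hσ, rfl⟩ := hT
    have h2 := hsim.1
    unfold Rank6 at h2
    rw [show M4.n = 4 from rfl, show (subPCM M4 3 (le_refl 3) σ).n = 3 from rfl,
      Kratio_M4] at h2
    have h3 : Kratio (subPCM M4 3 (le_refl 3) σ) ^ 3 ≤ 2 ^ 3 :=
      pow_le_pow_left₀ (by linarith) hle 3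
    norm_num at h2 h3
    linarith

/-- Example 6: the ranking `⪰⁶` satisfies `PR`, `IIP`, `HTE`, `SI` and `MON`,
but fails `RED`. -/
theorem rank6_properties :
    PR Rank6 ∧ IIP Rank6 ∧ HTE Rank6 ∧ SI Rank6 ∧ MON Rank6 ∧ ¬ RED Rank6 := by
  exact rank6_properties'
end

section
/- The inconsistency ranking ⪰¹, defined by A ⪰¹ B iff min_{i<j<k} max{ a_ij a_jk / a_ik , a_ik / (a_ij a_jk) } ≥ min_{i<j<k} max{ b_ij b_jk / b_ik , b_ik / (b_ij b_jk) }, is the unique inconsistency ranking satisfying invariance under inversion of preferences, homogeneous treatment of entities, scale invariance, monotonicity, reducibility, and negative responsiveness, where negative responsiveness requires that for triads S = (1; s2; 1) and T = (1; t2; 1) with s2, t2 ≥ 1, S ⪰ T ⟺ s2 ≥ t2. -/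
open Matrix

/-- Negative responsiveness: the reversed form of positive responsiveness. -/
noncomputable def NR (R : PCM → PCM → Prop) : Prop :=
  ∀ (s2 t2 : ℝ) (hs : 1 ≤ s2) (ht : 1 ≤ t2),
    (R (triad 1 s2 1 one_pos (lt_of_lt_of_le one_pos hs) one_pos)
       (triad 1 t2 1 one_pos (lt_of_lt_of_le one_pos ht) one_pos) ↔ t2 ≤ s2)



noncomputable def fval {n : ℕ} (A : Matrix (Fin n) (Fin n) ℝ) (t : Fin n × Fin n × Fin n) : ℝ :=
  max (A t.1 t.2.1 * A t.2.1 t.2.2 / A t.1 t.2.2)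
      (A t.1 t.2.2 / (A t.1 t.2.1 * A t.2.1 t.2.2))

lemma KminM_eq {n : ℕ} (hn : 3 ≤ n) (A : Matrix (Fin n) (Fin n) ℝ) :
    KminM hn A = (triples n).inf' (triples_nonempty n hn) (fval A) := rfl

lemma triples_three : triples 3 = {((0 : Fin 3), (1 : Fin 3), (2 : Fin 3))} := by decide

lemma KminM_three (A : Matrix (Fin 3) (Fin 3) ℝ) :
    KminM (le_refl 3) A = fval A (0, 1, 2) := by
  rw [KminM_eq]
  apply le_antisymm
  · exact Finset.inf'_le _ (by rw [triples_three]; exact Finset.mem_singleton_self _)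
  · apply Finset.le_inf'
    intro t ht
    rw [triples_three, Finset.mem_singleton] at ht
    rw [ht]

lemma Kmin_triad (t1 t2 t3 : ℝ) (h1 : 0 < t1) (h2 : 0 < t2) (h3 : 0 < t3) :
    Kmin (triad t1 t2 t3 h1 h2 h3) = max (t1 * t3 / t2) (t2 / (t1 * t3)) := by
  show KminM (le_refl 3) _ = _
  refine (KminM_three _).trans ?_
  simp [fval, triad]

lemma fval_ge_one {n : ℕ} (A : Matrix (Fin n) (Fin n) ℝ) (hp : ∀ i j, 0 < A i j)
    (t : Fin n × Fin n × Fin n) : 1 ≤ fval A t := by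
  have hx : 0 < A t.1 t.2.1 * A t.2.1 t.2.2 / A t.1 t.2.2 := by
    have := hp t.1 t.2.1; have := hp t.2.1 t.2.2; have := hp t.1 t.2.2; positivity
  rcases le_total 1 (A t.1 t.2.1 * A t.2.1 t.2.2 / A t.1 t.2.2) with h | h
  · exact le_max_of_le_left h
  · apply le_max_of_le_right
    rw [div_le_one (hp t.1 t.2.2)] at h
    rw [one_le_div (by have := hp t.1 t.2.1; have := hp t.2.1 t.2.2; positivity)]
    exact h

lemma Kmin_ge_one (M : PCM) : 1 ≤ Kmin M := by
  rw [Kmin, KminM_eq]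
  apply Finset.le_inf'
  intro t _
  exact fval_ge_one M.A M.pos t

lemma fval_swap12 {n : ℕ} (A : Matrix (Fin n) (Fin n) ℝ) (hp : ∀ i j, 0 < A i j)
    (hr : ∀ i j, A j i = 1 / A i j) (i j k : Fin n) :
    fval A (j, i, k) = fval A (i, j, k) := by
  unfold fval
  simp only
  rw [hr j i, max_comm]
  have ha := (hp i j).ne'
  have hb := (hp j k).ne'
  have hc := (hp i k).ne'
  congr 1 <;> field_simp <;> ring

lemma fval_swap23 {n : ℕ} (A : Matrix (Fin n) (Fin n) ℝ) (hp : ∀ i j, 0 < A i j)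
    (hr : ∀ i j, A j i = 1 / A i j) (i j k : Fin n) :
    fval A (i, k, j) = fval A (i, j, k) := by
  unfold fval
  simp only
  rw [hr j k, max_comm, mul_one_div, div_div_eq_mul_div, div_div, mul_comm (A j k)]

lemma exists_triple {n : ℕ} (A : Matrix (Fin n) (Fin n) ℝ) (hp : ∀ i j, 0 < A i j)
    (hr : ∀ i j, A j i = 1 / A i j) (σ : Fin 3 → Fin n) (hσ : Function.Injective σ) :
    ∃ t ∈ triples n, fval A t = fval A (σ 0, σ 1, σ 2) := by
  set i := σ 0; set j := σ 1; set k := σ 2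
  have hij : i ≠ j := fun h => absurd (hσ h) (by decide)
  have hik : i ≠ k := fun h => absurd (hσ h) (by decide)
  have hjk : j ≠ k := fun h => absurd (hσ h) (by decide)
  have mem : ∀ a b c : Fin n, a < b → b < c → (a, b, c) ∈ triples n := by
    intro a b c h1 h2
    simp only [triples, Finset.mem_filter, Finset.mem_univ, true_and]
    exact ⟨h1, h2⟩
  rcases lt_or_gt_of_ne hij with h1 | h1 <;> rcases lt_or_gt_of_ne hik with h2 | h2 <;>
      rcases lt_or_gt_of_ne hjk with h3 | h3
  · exact ⟨(i, j, k), mem _ _ _ h1 h3, rfl⟩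
  · exact ⟨(i, k, j), mem _ _ _ h2 h3, fval_swap23 A hp hr i j k⟩
  · exact absurd (h3.trans h2) (lt_asymm h1)
  · refine ⟨(k, i, j), mem _ _ _ h2 h1, ?_⟩
    rw [fval_swap12 A hp hr i k j, fval_swap23 A hp hr i j k]
  · exact ⟨(j, i, k), mem _ _ _ h1 h2, fval_swap12 A hp hr i j k⟩
  · exact absurd (h3.trans h1) (lt_asymm h2)
  · refine ⟨(j, k, i), mem _ _ _ h3 h2, ?_⟩
    rw [fval_swap23 A hp hr j i k, fval_swap12 A hp hr i j k]
  · refine ⟨(k, j, i), mem _ _ _ h3 h1, ?_⟩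
    rw [fval_swap12 A hp hr j k i, fval_swap23 A hp hr j i k, fval_swap12 A hp hr i j k]

lemma PCM_eq3 {h h' : 3 ≤ 3} {A B : Matrix (Fin 3) (Fin 3) ℝ} {pa ra pb rb}
    (hAB : A = B) : PCM.mk 3 h A pa ra = PCM.mk 3 h' B pb rb := by subst hAB; rfl

lemma diag_one (M : PCM) (i : Fin M.n) : M.A i i = 1 := by
  have h := M.recip i i
  have hp := M.pos i i
  have h2 : (M.A i i - 1) * (M.A i i + 1) = 0 := by
    have : M.A i i * M.A i i = 1 := by
      field_simp at h
      nlinarith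
    nlinarith
  rcases mul_eq_zero.mp h2 with h3 | h3
  · linarith
  · linarith

lemma triad_congr {a b c a' b' c' : ℝ} {h1 h2 h3} (ha : a = a') (hb : b = b') (hc : c = c')
    {h1' : 0 < a'} {h2' : 0 < b'} {h3' : 0 < c'} :
    triad a b c h1 h2 h3 = triad a' b' c' h1' h2' h3' := by
  subst ha; subst hb; subst hc; rfl

lemma triad_tr (t1 t2 t3 : ℝ) (h1 : 0 < t1) (h2 : 0 < t2) (h3 : 0 < t3) :
    (triad t1 t2 t3 h1 h2 h3).tr = triad (1/t1) (1/t2) (1/t3)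
      (by positivity) (by positivity) (by positivity) := by
  show PCM.mk 3 _ _ _ _ = _
  unfold triad
  apply PCM_eq3
  ext i j
  fin_cases i <;> fin_cases j <;> simp [one_div_one_div]

lemma subPCM_eq_triad (M : PCM) (σ : Fin 3 → Fin M.n) :
    subPCM M 3 (le_refl 3) σ =
      triad (M.A (σ 0) (σ 1)) (M.A (σ 0) (σ 2)) (M.A (σ 1) (σ 2))
        (M.pos _ _) (M.pos _ _) (M.pos _ _) := by
  unfold subPCM triad
  apply PCM_eq3
  ext i j
  fin_cases i <;> fin_cases j <;>
    simp [diag_one, M.recip (σ 0) (σ 1), M.recip (σ 0) (σ 2), M.recip (σ 1) (σ 2)]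

lemma Kmin_subPCM (M : PCM) (σ : Fin 3 → Fin M.n) :
    Kmin (subPCM M 3 (le_refl 3) σ) = fval M.A (σ 0, σ 1, σ 2) := by
  show KminM (le_refl 3) _ = _
  refine (KminM_three _).trans ?_
  rfl

lemma Kmin_le_triadOf (M T : PCM) (h : IsTriadOf T M) : Kmin M ≤ Kmin T := by
  obtain ⟨σ, hσ, rfl⟩ := h
  rw [Kmin_subPCM]
  obtain ⟨t, ht, he⟩ := exists_triple M.A M.pos M.recip σ hσ
  rw [← he, Kmin, KminM_eq]
  exact Finset.inf'_le _ ht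

lemma exists_arg_triad (M : PCM) : ∃ T : PCM, IsTriadOf T M ∧ Kmin T = Kmin M := by
  obtain ⟨t, ht, he⟩ := Finset.exists_mem_eq_inf' (triples_nonempty M.n M.hn) (fval M.A)
  simp only [triples, Finset.mem_filter, Finset.mem_univ, true_and] at ht
  set σ : Fin 3 → Fin M.n := ![t.1, t.2.1, t.2.2] with hσdef
  have hσ : Function.Injective σ := by
    have h12 := ht.1.ne
    have h23 := ht.2.ne
    have h13 := (ht.1.trans ht.2).ne
    intro a b hab
    fin_cases a <;> fin_cases b <;> simp_all [σ]
  refine ⟨subPCM M 3 (le_refl 3) σ, ⟨σ, hσ, rfl⟩, ?_⟩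
  rw [Kmin_subPCM]
  have : (σ 0, σ 1, σ 2) = t := by simp [σ]
  rw [this, Kmin, KminM_eq, ← he]

lemma Kmin_triad_vee (s2 : ℝ) (hs : 1 ≤ s2) (h2 : 0 < s2) :
    Kmin (triad 1 s2 1 one_pos h2 one_pos) = s2 := by
  rw [Kmin_triad]
  rw [max_eq_right]
  · rw [one_mul, div_one]
  · rw [one_mul, div_one, one_div]
    calc s2⁻¹ ≤ 1 := by rw [inv_le_one_iff₀]; right; exact hs
      _ ≤ s2 := hs

lemma rank1_isRanking : IsRanking Rank1 :=
  ⟨fun M N => le_total (Kmin N) (Kmin M),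
   fun _ _ _ h1 h2 => le_trans h2 h1⟩

lemma rank1_NR : NR Rank1 := by
  intro s2 t2 hs ht
  unfold Rank1
  rw [Kmin_triad_vee s2 hs, Kmin_triad_vee t2 ht]

lemma rank1_IIP : IIP Rank1 := by
  intro t1 t2 t3 h1 h2 h3
  have he : Kmin (triad t1 t2 t3 h1 h2 h3).tr = Kmin (triad t1 t2 t3 h1 h2 h3) := by
    rw [triad_tr, Kmin_triad, Kmin_triad, max_comm]
    congr 1 <;> field_simp
  constructor <;> (show Kmin _ ≤ Kmin _; rw [he])

lemma rank1_HTE : HTE Rank1 := by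
  intro t2 t3 h2 h3
  have he : Kmin (triad 1 (t2/t3) 1 one_pos (div_pos h2 h3) one_pos)
      = Kmin (triad 1 t2 t3 one_pos h2 h3) := by
    rw [Kmin_triad, Kmin_triad]
    congr 1 <;> field_simp
  constructor <;> (show Kmin _ ≤ Kmin _; rw [he])

lemma rank1_SI : SI Rank1 := by
  intro t1 t2 t3 k h1 h2 h3 hk
  have he : Kmin (triad (k*t1) (k^2*t2) (k*t3) (by positivity) (by positivity) (by positivity))
      = Kmin (triad t1 t2 t3 h1 h2 h3) := by
    rw [Kmin_triad, Kmin_triad]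
    congr 1 <;> field_simp <;> ring
  constructor <;> (show Kmin _ ≤ Kmin _; rw [he])

lemma rank1_MON : MON Rank1 := fun M T h => Kmin_le_triadOf M T h

lemma rank1_RED : RED Rank1 := by
  intro M
  obtain ⟨T, hT, hK⟩ := exists_arg_triad M
  exact ⟨T, hT, le_of_eq hK, le_of_eq hK.symm⟩

lemma Sim_trans {R : PCM → PCM → Prop} (hR : Transitive R) {A B C : PCM}
    (h1 : Sim R A B) (h2 : Sim R B C) : Sim R A C :=
  ⟨hR h1.1 h2.1, hR h2.2 h1.2⟩

lemma norm_triad {R : PCM → PCM → Prop} (hTr : Transitive R)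
    (hiip : IIP R) (hhte : HTE R) (hsi : SI R)
    (t1 t2 t3 : ℝ) (h1 : 0 < t1) (h2 : 0 < t2) (h3 : 0 < t3) :
    Sim R (triad t1 t2 t3 h1 h2 h3)
      (triad 1 (max (t1*t3/t2) (t2/(t1*t3))) 1 one_pos
        (lt_max_of_lt_right (by positivity)) one_pos) := by
  have s1 := hsi t1 t2 t3 (1/t1) h1 h2 h3 (by positivity)
  have e1 : triad ((1/t1)*t1) ((1/t1)^2*t2) ((1/t1)*t3)
        (by positivity) (by positivity) (by positivity)
      = triad 1 (t2/t1^2) (t3/t1) one_pos (by positivity) (by positivity) :=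
    triad_congr (by field_simp) (by field_simp) (by field_simp)
  rw [e1] at s1
  have s2 := hhte (t2/t1^2) (t3/t1) (by positivity) (by positivity)
  have e2 : triad 1 ((t2/t1^2)/(t3/t1)) 1 one_pos (div_pos (by positivity) (by positivity)) one_pos
      = triad 1 (t2/(t1*t3)) 1 one_pos (by positivity) one_pos :=
    triad_congr rfl (by field_simp) rfl
  rw [e2] at s2
  have sW : Sim R (triad t1 t2 t3 h1 h2 h3)
      (triad 1 (t2/(t1*t3)) 1 one_pos (by positivity) one_pos) := Sim_trans hTr s1 s2
  have hinv : t1*t3/t2 = 1/(t2/(t1*t3)) := by rw [one_div_div]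
  rcases le_total 1 (t2/(t1*t3)) with hw | hw
  · have e3 : triad 1 (t2/(t1*t3)) 1 one_pos (by positivity) one_pos
        = triad 1 (max (t1*t3/t2) (t2/(t1*t3))) 1 one_pos
            (lt_max_of_lt_right (by positivity)) one_pos := by
      refine triad_congr rfl ?_ rfl
      rw [max_eq_right]
      rw [hinv]
      calc 1/(t2/(t1*t3)) ≤ 1 := by
            rw [div_le_one (by positivity)]; exact hw
        _ ≤ t2/(t1*t3) := hw
    rw [e3] at sW
    exact sW
  · have hwpos : (0:ℝ) < t2/(t1*t3) := by positivity
    have s3 := hiip 1 (t2/(t1*t3)) 1 one_pos hwpos one_pos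
    rw [triad_tr] at s3
    have e4 : triad (1/1) (1/(t2/(t1*t3))) (1/1) (by positivity) (by positivity) (by positivity)
        = triad 1 (max (t1*t3/t2) (t2/(t1*t3))) 1 one_pos
            (lt_max_of_lt_right (by positivity)) one_pos := by
      refine triad_congr (by norm_num) ?_ (by norm_num)
      rw [← hinv, max_eq_left]
      rw [hinv]
      calc t2/(t1*t3) ≤ 1 := hw
        _ ≤ 1/(t2/(t1*t3)) := by rw [le_div_iff₀ hwpos]; nlinarith
    rw [e4] at s3
    exact Sim_trans hTr sW s3

lemma norm_triadOf {R : PCM → PCM → Prop} (hTr : Transitive R)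
    (hiip : IIP R) (hhte : HTE R) (hsi : SI R) {M T : PCM} (h : IsTriadOf T M) :
    Sim R T (triad 1 (Kmin T) 1 one_pos
      (lt_of_lt_of_le one_pos (Kmin_ge_one T)) one_pos) := by
  obtain ⟨σ, hσ, rfl⟩ := h
  have hv := norm_triad hTr hiip hhte hsi (M.A (σ 0) (σ 1)) (M.A (σ 0) (σ 2)) (M.A (σ 1) (σ 2))
    (M.pos _ _) (M.pos _ _) (M.pos _ _)
  have e0 := subPCM_eq_triad M σ
  rw [e0]
  have eK : max (M.A (σ 0) (σ 1) * M.A (σ 1) (σ 2) / M.A (σ 0) (σ 2))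
      (M.A (σ 0) (σ 2) / (M.A (σ 0) (σ 1) * M.A (σ 1) (σ 2)))
      = Kmin (subPCM M 3 (le_refl 3) σ) := by
    rw [Kmin_subPCM]; rfl
  rw [triad_congr rfl eK rfl] at hv
  exact hv

lemma norm_M {R : PCM → PCM → Prop} (hTr : Transitive R) (hnr : NR R)
    (hiip : IIP R) (hhte : HTE R) (hsi : SI R) (hmon : MON R) (hred : RED R) (M : PCM) :
    Sim R M (triad 1 (Kmin M) 1 one_pos
      (lt_of_lt_of_le one_pos (Kmin_ge_one M)) one_pos) := by
  obtain ⟨T, hT, hMT⟩ := hred M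
  have h1 := norm_triadOf hTr hiip hhte hsi hT
  obtain ⟨T', hT', hKT'⟩ := exists_arg_triad M
  have h2 := norm_triadOf hTr hiip hhte hsi hT'
  have hchain : R (triad 1 (Kmin T') 1 one_pos
        (lt_of_lt_of_le one_pos (Kmin_ge_one T')) one_pos)
      (triad 1 (Kmin T) 1 one_pos
        (lt_of_lt_of_le one_pos (Kmin_ge_one T)) one_pos) :=
    hTr h2.2 (hTr (hmon M T' hT') (hTr hMT.1 h1.1))
  have hle : Kmin T ≤ Kmin T' :=
    (hnr (Kmin T') (Kmin T) (Kmin_ge_one T') (Kmin_ge_one T)).mp hchain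
  have hKeq : Kmin T = Kmin M :=
    le_antisymm (hKT' ▸ hle) (Kmin_le_triadOf M T hT)
  have hfin := Sim_trans hTr hMT h1
  rw [triad_congr rfl hKeq rfl] at hfin
  exact hfin


/-- The ranking `⪰¹` is the unique inconsistency ranking satisfying `IIP`, `HTE`, `SI`,
`MON`, `RED` and negative responsiveness. -/
theorem rank1_characterization :
    (IsRanking Rank1 ∧ NR Rank1 ∧ IIP Rank1 ∧ HTE Rank1 ∧ SI Rank1 ∧
      MON Rank1 ∧ RED Rank1) ∧
    (∀ R : PCM → PCM → Prop, IsRanking R →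
      NR R → IIP R → HTE R → SI R → MON R → RED R →
      ∀ M N : PCM, R M N ↔ Rank1 M N) := by
  refine ⟨⟨rank1_isRanking, rank1_NR, rank1_IIP, rank1_HTE, rank1_SI, rank1_MON, rank1_RED⟩, ?_⟩
  intro R hrank hnr hiip hhte hsi hmon hred M N
  obtain ⟨hTot, hTr⟩ := hrank
  have hM := norm_M hTr hnr hiip hhte hsi hmon hred M
  have hN := norm_M hTr hnr hiip hhte hsi hmon hred N
  constructor
  · intro h
    exact (hnr (Kmin M) (Kmin N) (Kmin_ge_one M) (Kmin_ge_one N)).mp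
      (hTr hM.2 (hTr h hN.1))
  · intro h
    exact hTr hM.1
      (hTr ((hnr (Kmin M) (Kmin N) (Kmin_ge_one M) (Kmin_ge_one N)).mpr h) hN.2)
end
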